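/- Let (M, M') be a matroid perspective on a finite set E and e ∈ E an isthmus of M that is not an isthmus of M'. Then T_{M→M'}(x,y,z) = z · T_{M\e → M'\e}(x,y,z) + T_{M/e → M'/e}(x,y,z). -/

import Mathlib

open Finset

/-- The Tutte polynomial of a matroid perspective, as a sum over subsets. -/
noncomputable def Tpersp {α : Type*} [DecidableEq α] (E : Finset α)
    (r r' : Finset α → ℤ) (x y z : ℝ) : ℝ :=
  ∑ X ∈ E.powerset,
    (x - 1) ^ (r' E - r' X) * (y - 1) ^ ((X.card : ℤ) - r X) *
      z ^ ((r E - r X) - (r' E - r' X))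

/-!
Summing over `X ⊆ E` by whether `e ∈ X`, the terms with `e ∉ X` are those of the deletion and
the terms `X = insert e Y` those of the contraction, once we know `r E = r (E \ e) + 1`,
`r' E = r' (E \ e)` and `r {e} = 1`. Against the deletion, each such term then carries one
extra factor `z`; the perspective inequality keeps the `z`-exponents nonnegative, so this also
holds at `z = 0`. That `e` is not an isthmus of `M'` gives some `A ⊆ E \ e` with
`r' (A + e) = r' A`, and the local rank axioms propagate this up to `A = E \ e`.
-/

lemma zpow_add_one_of_nonneg {G₀ : Type*} [GroupWithZero G₀] (a : G₀) {k : ℤ} (hk : 0 ≤ k) :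
    a ^ (k + 1) = a ^ k * a := by
  rw [zpow_add' (Or.inr (Or.inl (by omega))), zpow_one]

namespace Tpersp

variable {α : Type*} [DecidableEq α]

def contract (r : Finset α → ℤ) (e : α) (A : Finset α) : ℤ :=
  r (insert e A) - r {e}

section RankAxioms

variable {E : Finset α} {r : Finset α → ℤ}

lemma rank_insert_insert_eq
    (hr1 : ∀ A ⊆ E, ∀ a ∈ E, r (insert a A) = r A ∨ r (insert a A) = r A + 1)
    (hr2 : ∀ A ⊆ E, ∀ a ∈ E, ∀ b ∈ E, r A = r (insert a A) → r A = r (insert b A) →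
      r (insert b (insert a A)) = r A)
    {D : Finset α} {a b : α} (hD : D ⊆ E) (ha : a ∈ E) (hb : b ∈ E)
    (hDa : r (insert a D) = r D) :
    r (insert a (insert b D)) = r (insert b D) := by
  have hcomm : insert b (insert a D) = insert a (insert b D) := insert_comm _ _ _
  rcases hr1 D hD b hb with hDb | hDb
  · have := hr2 D hD a ha b hb hDa.symm hDb.symm
    rw [hcomm] at this
    omega
  · rcases hr1 (insert b D) (insert_subset hb hD) a ha with h | h
    · exact h
    · -- `r (D + a + b) ≤ r (D + a) + 1 = r D + 1`, yet `r (D + b + a) = r D + 2`.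
      rcases hr1 (insert a D) (insert_subset ha hD) b hb with h' | h' <;>
        rw [hcomm] at h' <;> omega

lemma rank_insert_eq_of_subset
    (hr1 : ∀ A ⊆ E, ∀ a ∈ E, r (insert a A) = r A ∨ r (insert a A) = r A + 1)
    (hr2 : ∀ A ⊆ E, ∀ a ∈ E, ∀ b ∈ E, r A = r (insert a A) → r A = r (insert b A) →
      r (insert b (insert a A)) = r A)
    {A B : Finset α} {a : α} (hAB : A ⊆ B) (hB : B ⊆ E) (ha : a ∈ E)
    (hAa : r (insert a A) = r A) :
    r (insert a B) = r B := by
  suffices ∀ C ⊆ E, r (insert a (A ∪ C)) = r (A ∪ C) by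
    simpa [union_eq_right.mpr hAB] using this B hB
  intro C
  induction C using Finset.induction_on with
  | empty => intro _; simpa using hAa
  | insert b C _ ih =>
    intro hbC
    obtain ⟨hb, hC⟩ := insert_subset_iff.mp hbC
    rw [union_insert]
    exact rank_insert_insert_eq hr1 hr2 (union_subset (hAB.trans hB) hC) ha hb (ih hC)

end RankAxioms

theorem insert_eq_of_isthmus_of_mem_closure {F : Finset α} {r r' : Finset α → ℤ} {e : α}
    (he : e ∉ F) (hre : r {e} = 1) (hrF : r (insert e F) = r F + 1)
    (hr'F : r' (insert e F) = r' F) (hpersp : ∀ X ⊆ F, r' F - r' X ≤ r F - r X)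
    (x y z : ℝ) :
    Tpersp (insert e F) r r' x y z =
      z * Tpersp F r r' x y z + Tpersp F (contract r e) (contract r' e) x y z := by
  unfold Tpersp contract
  rw [sum_powerset_insert he, mul_sum]
  congr 1
  · refine sum_congr rfl fun X hX => ?_
    have hk := hpersp X (mem_powerset.mp hX)
    rw [hrF, hr'F, show r F + 1 - r X - (r' F - r' X) = r F - r X - (r' F - r' X) + 1 by ring,
      zpow_add_one_of_nonneg z (by omega)]
    ring
  · refine sum_congr rfl fun X hX => ?_
    have heX : e ∉ X := fun h => he (mem_powerset.mp hX h)
    rw [card_insert_of_notMem heX, hre]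
    push_cast
    congr 3 <;> ring

end Tpersp

open Tpersp in
theorem Tpersp_isthmus_not_isthmus_general {α : Type*} [DecidableEq α] (E : Finset α)
    (r r' : Finset α → ℤ)
    (hr0 : r ∅ = 0)
    (hr1' : ∀ A ⊆ E, ∀ a ∈ E, r' (insert a A) = r' A ∨ r' (insert a A) = r' A + 1)
    (hr2' : ∀ A ⊆ E, ∀ a ∈ E, ∀ b ∈ E, r' A = r' (insert a A) → r' A = r' (insert b A) →
      r' (insert b (insert a A)) = r' A)
    (hpersp : ∀ A B : Finset α, A ⊆ B → B ⊆ E → r B - r A ≥ r' B - r' A)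
    (e : α) (he : e ∈ E)
    (histhmus : ∀ A ⊆ E.erase e, r (insert e A) = r A + 1)
    (hnotisthmus' : ¬ (∀ A ⊆ E.erase e, r' (insert e A) = r' A + 1))
    (x y z : ℝ) :
    Tpersp E r r' x y z =
      z * Tpersp (E.erase e) r r' x y z +
      Tpersp (E.erase e) (fun A => r (insert e A) - r {e})
        (fun A => r' (insert e A) - r' {e}) x y z := by
  obtain ⟨A, hA, hAe⟩ := not_forall₂.mp hnotisthmus'
  have hr'A : r' (insert e A) = r' A :=
    (hr1' A (hA.trans (erase_subset e E)) e he).resolve_right hAe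
  have hre : r {e} = 1 := by simpa [hr0] using histhmus ∅ (empty_subset _)
  have := insert_eq_of_isthmus_of_mem_closure (notMem_erase e E) hre
    (histhmus _ Subset.rfl)
    (rank_insert_eq_of_subset hr1' hr2' hA (erase_subset e E) he hr'A)
    (fun X hX => hpersp X _ hX (erase_subset e E)) x y z
  rwa [insert_erase he] at this

/-- If `e` is an isthmus of `M` but not of `M'`, then `T = z · T_{delete} + T_{contract}`. -/
theorem Tpersp_isthmus_not_isthmus {α : Type*} [DecidableEq α] (E : Finset α)
    (r r' : Finset α → ℤ)
    (hr0 : r ∅ = 0) (hr0' : r' ∅ = 0)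
    (hr1 : ∀ A ⊆ E, ∀ a ∈ E, r (insert a A) = r A ∨ r (insert a A) = r A + 1)
    (hr1' : ∀ A ⊆ E, ∀ a ∈ E, r' (insert a A) = r' A ∨ r' (insert a A) = r' A + 1)
    (hr2 : ∀ A ⊆ E, ∀ a ∈ E, ∀ b ∈ E, r A = r (insert a A) → r A = r (insert b A) →
      r (insert b (insert a A)) = r A)
    (hr2' : ∀ A ⊆ E, ∀ a ∈ E, ∀ b ∈ E, r' A = r' (insert a A) → r' A = r' (insert b A) →
      r' (insert b (insert a A)) = r' A)
    (hpersp : ∀ A B : Finset α, A ⊆ B → B ⊆ E → r B - r A ≥ r' B - r' A)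
    (e : α) (he : e ∈ E)
    (histhmus : ∀ A ⊆ E.erase e, r (insert e A) = r A + 1)
    (hnotisthmus' : ¬ (∀ A ⊆ E.erase e, r' (insert e A) = r' A + 1))
    (x y z : ℝ) :
    Tpersp E r r' x y z =
      z * Tpersp (E.erase e) r r' x y z +
      Tpersp (E.erase e) (fun A => r (insert e A) - r {e})
        (fun A => r' (insert e A) - r' {e}) x y z :=
  Tpersp_isthmus_not_isthmus_general E r r' hr0 hr1' hr2' hpersp e he histhmus hnotisthmus' x y z
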